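/- arXiv:1509.00996 — 2 statements merged into one kernel-verified Lean document; each statement's English description precedes it below -/
import Mathlib

section
/- Subterm invariant: along any execution of the Strong MAM from an initial closed code t₀, every code occurring (1) as the current code in an evaluation-phase state, (2) in the stack, (3) in a stack stored in a frame pair, or (4) as the body of a substitution in the environment, is a subterm of t₀ (where subterms are compared up to renaming of all variables). -/
/-- Codes: pure λ-terms (no explicit substitutions). -/
inductive Code : Type
  | var : ℕ → Code
  | lam : ℕ → Code → Code
  | app : Code → Code → Code
  deriving DecidableEq

namespace Code
def fv : Code → Finset ℕ
  | var x => {x}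
  | lam x t => t.fv.erase x
  | app t u => t.fv ∪ u.fv

def bv : Code → Finset ℕ
  | var _ => ∅
  | lam x t => insert x t.bv
  | app t u => t.bv ∪ u.bv

def vars (t : Code) : Finset ℕ := t.fv ∪ t.bv

def size : Code → ℕ
  | var _ => 1
  | lam _ t => 1 + t.size
  | app t u => 1 + t.size + u.size
end Code

abbrev Stack := List Code

inductive FrameEntry : Type
  | pair : Code → Stack → FrameEntry
  | var : ℕ → FrameEntry
  deriving DecidableEq

abbrev Frame := List FrameEntry

inductive EnvEntry : Type
  | esub : ℕ → Code → EnvEntry   -- [x←t]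
  | opn : ℕ → EnvEntry           -- ⧫x  (scope opener)
  | cls : ℕ → EnvEntry           -- ⧪x  (scope closer)
  deriving DecidableEq

abbrev Env := List EnvEntry

/-- Weak environments: `E_w ::= ε | [x←t]:E_w | ⧪x:E_w:⧫x:E_w'`. -/
inductive IsWeakEnv : Env → Prop
  | nil : IsWeakEnv []
  | esub {E : Env} (x : ℕ) (t : Code) : IsWeakEnv E → IsWeakEnv (.esub x t :: E)
  | scope {Ew E : Env} (x : ℕ) : IsWeakEnv Ew → IsWeakEnv E →
      IsWeakEnv (.cls x :: (Ew ++ .opn x :: E))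

/-- Result of looking up a variable in an environment. -/
inductive Res : Type
  | bot
  | code : Code → Res
  | opn
  deriving DecidableEq

/-- Environment lookup `E(x)`, skipping closed scope segments `⧪y:E_w:⧫y`. -/
inductive LookupR : Env → ℕ → Res → Prop
  | nil (x : ℕ) : LookupR [] x .bot
  | subEq {E : Env} (x : ℕ) (t : Code) : LookupR (.esub x t :: E) x (.code t)
  | subNe {E : Env} {x y : ℕ} {r : Res} (t : Code) :
      x ≠ y → LookupR E x r → LookupR (.esub y t :: E) x r
  | opnEq {E : Env} (x : ℕ) : LookupR (.opn x :: E) x .opn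
  | opnNe {E : Env} {x y : ℕ} {r : Res} :
      x ≠ y → LookupR E x r → LookupR (.opn y :: E) x r
  | cls {Ew E : Env} {x : ℕ} {r : Res} (y : ℕ) :
      IsWeakEnv Ew → LookupR E x r → LookupR (.cls y :: (Ew ++ .opn y :: E)) x r

/-- `Λ(E)`: variables bound to an open scope by `E`. -/
def LamE (E : Env) : Set ℕ := {x | LookupR E x .opn}

/-- `Λ(F)`: variable entries of a frame. -/
def LamF (F : Frame) : Set ℕ := {x | FrameEntry.var x ∈ F}

/-- Weak frames: no variable entries. -/
def IsWeakFrame (F : Frame) : Prop := ∀ x : ℕ, FrameEntry.var x ∉ F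

/-- Trunk frames: empty or starting with a variable entry. -/
def IsTrunkFrame (F : Frame) : Prop :=
  F = [] ∨ ∃ (x : ℕ) (F' : Frame), F = .var x :: F'

/-- Trunk environments: `E_t ::= ε | ⧫x:E`. -/
def IsTrunkEnv (E : Env) : Prop :=
  E = [] ∨ ∃ (x : ℕ) (E' : Env), E = .opn x :: E'

/-- Compatibility between frames and environments. -/
inductive Compat : Frame → Env → Prop
  | nil : Compat [] []
  | weak {F : Frame} {E : Env} {Fw : Frame} {Ew : Env} :
      IsWeakFrame Fw → IsWeakEnv Ew → Compat F E → Compat (Fw ++ F) (Ew ++ E)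
  | abs {F : Frame} {E : Env} (x : ℕ) :
      Compat F E → Compat (.var x :: F) (.opn x :: E)
inductive Phase : Type
  | eval | back
  deriving DecidableEq

structure MState : Type where
  ph : Phase
  fr : Frame
  code : Code
  stk : Stack
  env : Env

def stackVars (π : Stack) : Finset ℕ := π.foldr (fun u s => u.vars ∪ s) ∅

def frameVars (F : Frame) : Finset ℕ :=
  F.foldr (fun e s =>
    (match e with
     | FrameEntry.pair u π => u.vars ∪ stackVars π
     | FrameEntry.var x => {x}) ∪ s) ∅

def envVars (E : Env) : Finset ℕ :=
  E.foldr (fun e s =>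
    (match e with
     | EnvEntry.esub x u => insert x u.vars
     | EnvEntry.opn x => {x}
     | EnvEntry.cls x => {x}) ∪ s) ∅

def MState.allVars (s : MState) : Finset ℕ :=
  frameVars s.fr ∪ s.code.vars ∪ stackVars s.stk ∪ envVars s.env

/-- Locally nameless skeleton used to define α-equivalence of codes. -/
inductive DB : Type
  | bvar : ℕ → DB
  | fvar : ℕ → DB
  | lam : DB → DB
  | app : DB → DB → DB
  deriving DecidableEq

def Code.toDB : List ℕ → Code → DB
  | ctx, .var x =>
      match ctx.idxOf? x with
      | some n => .bvar n
      | none => .fvar x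
  | ctx, .lam y t => .lam (Code.toDB (y :: ctx) t)
  | ctx, .app t u => .app (Code.toDB ctx t) (Code.toDB ctx u)

/-- α-equivalence of codes. -/
def Alpha (t u : Code) : Prop := Code.toDB [] t = Code.toDB [] u

def Code.bvList : Code → List ℕ
  | .var _ => []
  | .lam x t => x :: t.bvList
  | .app t u => t.bvList ++ u.bvList

/-- Well-named codes: distinct binders bind distinct variables, and bound and
free variables are disjoint. -/
def Code.wellNamed (t : Code) : Prop :=
  t.bvList.Nodup ∧ ∀ x ∈ t.bvList, x ∉ t.fv

/-- Transition labels of the Strong MAM. -/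
inductive MLab : Type
  | c1 | c2 | c3 | c4 | c5 | c6 | m | e
  deriving DecidableEq

/-- The labelled transitions of the Strong MAM. -/
inductive MStepL : MLab → MState → MState → Prop
  | c1 {F : Frame} {t u : Code} {π : Stack} {E : Env} :
      MStepL .c1 ⟨.eval, F, .app t u, π, E⟩ ⟨.eval, F, t, u :: π, E⟩
  | mul {F : Frame} {x : ℕ} {t u : Code} {π : Stack} {E : Env} :
      MStepL .m ⟨.eval, F, .lam x t, u :: π, E⟩ ⟨.eval, F, t, π, .esub x u :: E⟩
  | c2 {F : Frame} {x : ℕ} {t : Code} {E : Env} :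
      MStepL .c2 ⟨.eval, F, .lam x t, [], E⟩ ⟨.eval, .var x :: F, t, [], .opn x :: E⟩
  | exp {F : Frame} {x : ℕ} {t t' : Code} {π : Stack} {E : Env} :
      LookupR E x (.code t) → Alpha t t' →
      Disjoint t'.bv (MState.allVars ⟨.eval, F, .var x, π, E⟩) →
      MStepL .e ⟨.eval, F, .var x, π, E⟩ ⟨.eval, F, t', π, E⟩
  | c3 {F : Frame} {x : ℕ} {π : Stack} {E : Env} :
      LookupR E x .opn →
      MStepL .c3 ⟨.eval, F, .var x, π, E⟩ ⟨.back, F, .var x, π, E⟩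
  | c4 {F : Frame} {x : ℕ} {t : Code} {E : Env} :
      MStepL .c4 ⟨.back, .var x :: F, t, [], E⟩ ⟨.back, F, .lam x t, [], .cls x :: E⟩
  | c5 {F : Frame} {t u : Code} {π : Stack} {E : Env} :
      MStepL .c5 ⟨.back, .pair t π :: F, u, [], E⟩ ⟨.back, F, .app t u, π, E⟩
  | c6 {F : Frame} {t u : Code} {π : Stack} {E : Env} :
      MStepL .c6 ⟨.back, F, t, u :: π, E⟩ ⟨.eval, .pair t π :: F, u, [], E⟩

def MStep (s s' : MState) : Prop := ∃ l, MStepL l s s'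

def initState (t0 : Code) : MState := ⟨.eval, [], t0, [], []⟩

/-- Labelled executions of the Strong MAM. -/
inductive Exec : List MLab → MState → MState → Prop
  | nil (s : MState) : Exec [] s s
  | cons {l : MLab} {ls : List MLab} {s s' s'' : MState} :
      MStepL l s s' → Exec ls s' s'' → Exec (l :: ls) s s''

/-- Skeleton of a code: the code where all variables are erased. -/
inductive Skel : Type
  | var : Skel
  | lam : Skel → Skel
  | app : Skel → Skel → Skel
  deriving DecidableEq

def Code.skel : Code → Skel
  | .var _ => .var
  | .lam _ t => .lam t.skel
  | .app t u => .app t.skel u.skel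

inductive IsSubSkel : Skel → Skel → Prop
  | refl (s : Skel) : IsSubSkel s s
  | lam {s t : Skel} : IsSubSkel s t → IsSubSkel s (.lam t)
  | appL {s t u : Skel} : IsSubSkel s t → IsSubSkel s (.app t u)
  | appR {s t u : Skel} : IsSubSkel s u → IsSubSkel s (.app t u)

/-- `u` is a subterm of `t` up to renaming of all (free and bound) variables. -/
def SubtermUpTo (u t : Code) : Prop := IsSubSkel u.skel t.skel

theorem IsSubSkel.trans' {a b c : Skel} (h1 : IsSubSkel a b) (h2 : IsSubSkel b c) :
    IsSubSkel a c := by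
  induction h2 with
  | refl => exact h1
  | lam _ ih => exact .lam ih
  | appL _ ih => exact .appL ih
  | appR _ ih => exact .appR ih

def DB.skel : DB → Skel
  | .bvar _ => .var
  | .fvar _ => .var
  | .lam t => .lam t.skel
  | .app t u => .app t.skel u.skel

theorem toDB_skel (t : Code) : ∀ ctx, (Code.toDB ctx t).skel = t.skel := by
  induction t with
  | var x => intro ctx; simp only [Code.toDB]; cases ctx.idxOf? x <;> rfl
  | lam y t ih => intro ctx; simp [Code.toDB, DB.skel, Code.skel, ih]
  | app t u iht ihu => intro ctx; simp [Code.toDB, DB.skel, Code.skel, iht, ihu]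

theorem Alpha.skel_eq {t u : Code} (h : Alpha t u) : t.skel = u.skel := by
  have := congrArg DB.skel h
  rwa [toDB_skel, toDB_skel] at this

theorem lookup_mem {E : Env} {x : ℕ} {t : Code} (h : LookupR E x (.code t)) :
    ∃ y, EnvEntry.esub y t ∈ E := by
  generalize hr : Res.code t = r at h
  induction h with
  | nil => exact absurd hr (by simp)
  | subEq x t' => exact ⟨x, by obtain rfl := Res.code.inj hr; exact List.mem_cons_self⟩
  | subNe _ _ _ ih => obtain ⟨y, hy⟩ := ih hr; exact ⟨y, List.mem_cons_of_mem _ hy⟩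
  | opnEq => exact absurd hr (by simp)
  | opnNe _ _ ih => obtain ⟨y, hy⟩ := ih hr; exact ⟨y, List.mem_cons_of_mem _ hy⟩
  | cls y _ _ ih =>
      obtain ⟨z, hz⟩ := ih hr
      exact ⟨z, List.mem_cons_of_mem _ (List.mem_append_right _ (List.mem_cons_of_mem _ hz))⟩

/-- Subterm invariant of the Strong MAM: in any reachable state, the current
code (in an evaluation phase), the codes in the stack, the codes in stacks
stored in frame pairs, and the bodies of substitutions in the environment are
all subterms of the initial code, up to renaming of variables. -/
theorem subterm_invariant (t0 : Code) (hclosed : t0.fv = ∅)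
    (s : MState)
    (hreach : Relation.ReflTransGen MStep (initState t0) s) :
    (s.ph = Phase.eval → SubtermUpTo s.code t0) ∧
    (∀ u ∈ s.stk, SubtermUpTo u t0) ∧
    (∀ (t : Code) (π : Stack), FrameEntry.pair t π ∈ s.fr →
        ∀ u ∈ π, SubtermUpTo u t0) ∧
    (∀ (x : ℕ) (u : Code), EnvEntry.esub x u ∈ s.env → SubtermUpTo u t0) := by
  induction hreach with
  | refl =>
      refine ⟨fun _ => IsSubSkel.refl _, ?_, ?_, ?_⟩ <;> simp [initState]
  | tail _ hstep ih =>
      obtain ⟨hcode, hstk, hfr, henv⟩ := ih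
      obtain ⟨l, hstep⟩ := hstep
      cases hstep with
      | @c1 F t u π E =>
          have h := hcode rfl
          exact ⟨fun _ => IsSubSkel.trans' (.appL (.refl _)) h,
            fun v hv => by
              rcases List.mem_cons.mp hv with rfl | hv
              · exact IsSubSkel.trans' (.appR (.refl _)) h
              · exact hstk v hv,
            hfr, henv⟩
      | @mul F x t u π E =>
          have h := hcode rfl
          exact ⟨fun _ => IsSubSkel.trans' (.lam (.refl _)) h,
            fun v hv => hstk v (List.mem_cons_of_mem _ hv),
            hfr,
            fun y v hv => by
              rcases List.mem_cons.mp hv with heq | hv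
              · obtain ⟨rfl, rfl⟩ := EnvEntry.esub.inj heq
                exact hstk v (List.mem_cons_self)
              · exact henv y v hv⟩
      | @c2 F x t E =>
          have h := hcode rfl
          refine ⟨fun _ => IsSubSkel.trans' (.lam (.refl _)) h, hstk,
            fun t' π' hp => hfr t' π' ?_,
            fun y v hv => ?_⟩
          · rcases List.mem_cons.mp hp with heq | hp
            · exact absurd heq (by simp)
            · exact hp
          · rcases List.mem_cons.mp hv with heq | hv
            · exact absurd heq (by simp)
            · exact henv y v hv
      | @exp F x t t' π E hlook halpha _ =>
          obtain ⟨y, hy⟩ := lookup_mem hlook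
          refine ⟨fun _ => ?_, hstk, hfr, henv⟩
          have h2 := henv y t hy
          unfold SubtermUpTo at *
          rwa [← halpha.skel_eq]
      | c3 _ => exact ⟨fun h => (nomatch h), hstk, hfr, henv⟩
      | @c4 F x t E =>
          exact ⟨fun h => (nomatch h), hstk,
            fun t' π' hp => hfr t' π' (List.mem_cons_of_mem _ hp),
            fun y v hv => by
              rcases List.mem_cons.mp hv with heq | hv
              · exact absurd heq (by simp)
              · exact henv y v hv⟩
      | @c5 F t u π E =>
          exact ⟨fun h => (nomatch h),
            fun v hv => hfr t π (List.mem_cons_self) v hv,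
            fun t' π' hp => hfr t' π' (List.mem_cons_of_mem _ hp), henv⟩
      | @c6 F t u π E =>
          exact ⟨fun _ => hstk u (List.mem_cons_self),
            fun v hv => by simp at hv,
            fun t' π' hp => by
              rcases List.mem_cons.mp hp with heq | hp
              · obtain ⟨rfl, rfl⟩ := FrameEntry.pair.inj heq
                exact fun v hv => hstk v (List.mem_cons_of_mem _ hv)
              · exact hfr t' π' hp,
            henv⟩
end

section
/- Bilinearity of the Strong MAM: for any execution ρ from an initial state with code t, (1) the number of evaluation-phase commutative steps satisfies |ρ|c-eval + |ρ|m ≤ (1+|ρ|e)·|t|; (2) the number of backtracking commutative steps satisfies |ρ|c-back ≤ 2·|ρ|c-eval; hence (3) the total number of commutative steps satisfies |ρ|c ≤ 3·(1+|ρ|e)·|t|. -/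
/-! ### Auxiliary material for the bilinearity proof -/

def DB.size : DB → ℕ
  | .bvar _ => 1
  | .fvar _ => 1
  | .lam t => 1 + t.size
  | .app t u => 1 + t.size + u.size

lemma toDB_size : ∀ (t : Code) (ctx : List ℕ), (Code.toDB ctx t).size = t.size := by
  intro t
  induction t with
  | var x =>
      intro ctx
      simp only [Code.toDB]
      cases h : ctx.idxOf? x <;> simp [DB.size, Code.size]
  | lam y t ih => intro ctx; simp [Code.toDB, Code.size, DB.size, ih]
  | app t u iht ihu => intro ctx; simp [Code.toDB, Code.size, DB.size, iht, ihu]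

lemma Alpha.size_eq {t u : Code} (h : Alpha t u) : t.size = u.size := by
  have := congrArg DB.size h
  rwa [toDB_size, toDB_size] at this

def stackSize (π : Stack) : ℕ := (π.map Code.size).sum

def frameSize (F : Frame) : ℕ :=
  (F.map fun e => match e with
    | FrameEntry.pair _ π => stackSize π
    | FrameEntry.var _ => 0).sum

def meas (s : MState) : ℕ :=
  frameSize s.fr + stackSize s.stk +
    (match s.ph with | .eval => s.code.size | .back => 0)

def MamInv (B : ℕ) (s : MState) : Prop :=
  (∀ u ∈ s.stk, u.size ≤ B) ∧
  (∀ x u, EnvEntry.esub x u ∈ s.env → u.size ≤ B) ∧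
  (∀ u π, FrameEntry.pair u π ∈ s.fr → ∀ v ∈ π, v.size ≤ B) ∧
  (s.ph = .eval → s.code.size ≤ B)

lemma lookup_code_bound {B : ℕ} :
    ∀ {E : Env} {x : ℕ} {r : Res}, LookupR E x r →
      (∀ y u, EnvEntry.esub y u ∈ E → u.size ≤ B) →
      ∀ t : Code, r = .code t → t.size ≤ B := by
  intro E x r h
  induction h with
  | nil => intro _ t ht; cases ht
  | subEq x t => intro hb t' ht; cases ht; exact hb _ _ List.mem_cons_self
  | subNe t hne h ih =>
      intro hb t' ht
      exact ih (fun y u hu => hb y u (List.mem_cons_of_mem _ hu)) t' ht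
  | opnEq => intro _ t ht; cases ht
  | opnNe hne h ih =>
      intro hb t' ht
      exact ih (fun y u hu => hb y u (List.mem_cons_of_mem _ hu)) t' ht
  | cls y hEw h ih =>
      intro hb t' ht
      apply ih _ t' ht
      intro y' u hu
      apply hb y' u
      simp [hu]

def cost (l : MLab) : ℕ :=
  match l with
  | .c1 | .c2 | .c3 | .m => 1
  | _ => 0

lemma step_inv_meas {B : ℕ} {l : MLab} {s s' : MState}
    (h : MStepL l s s') (hInv : MamInv B s) :
    MamInv B s' ∧ meas s' + cost l ≤ meas s + (if l = .e then B else 0) := by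
  obtain ⟨h1, h2, h3, h4⟩ := hInv
  cases h with
  | c1 =>
      rename_i F t u π E
      have hc := h4 rfl
      simp only [Code.size] at hc
      refine ⟨⟨?_, h2, h3, ?_⟩, ?_⟩
      · intro v hv
        rcases List.mem_cons.mp hv with rfl | hv
        · omega
        · exact h1 v hv
      · intro _; simp only; omega
      · simp [meas, stackSize, frameSize, Code.size, cost]; omega
  | mul =>
      rename_i F x t u π E
      have hc := h4 rfl
      simp only [Code.size] at hc
      have hu : u.size ≤ B := h1 u List.mem_cons_self
      refine ⟨⟨?_, ?_, h3, ?_⟩, ?_⟩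
      · intro v hv; exact h1 v (List.mem_cons_of_mem _ hv)
      · intro y v hv
        rcases List.mem_cons.mp hv with he | hv
        · cases he; exact hu
        · exact h2 y v hv
      · intro _; simp only; omega
      · simp [meas, stackSize, frameSize, Code.size, cost]; omega
  | c2 =>
      rename_i F x t E
      have hc := h4 rfl
      simp only [Code.size] at hc
      refine ⟨⟨h1, ?_, ?_, ?_⟩, ?_⟩
      · intro y v hv
        rcases List.mem_cons.mp hv with he | hv
        · cases he
        · exact h2 y v hv
      · intro v π hv
        rcases List.mem_cons.mp hv with he | hv
        · cases he
        · exact h3 v π hv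
      · intro _; simp only; omega
      · simp [meas, stackSize, frameSize, Code.size, cost]
  | exp hlook halpha hdisj =>
      rename_i F x t t' π E
      have ht : t.size ≤ B := lookup_code_bound hlook h2 t rfl
      have ht' : t'.size ≤ B := by rw [← halpha.size_eq]; exact ht
      refine ⟨⟨h1, h2, h3, fun _ => ht'⟩, ?_⟩
      simp [meas, stackSize, frameSize, Code.size, cost]; omega
  | c3 =>
      refine ⟨⟨h1, h2, h3, ?_⟩, ?_⟩
      · intro hh; exact absurd hh (by simp)
      · simp [meas, stackSize, frameSize, Code.size, cost]
  | c4 =>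
      rename_i F x t E
      refine ⟨⟨h1, ?_, ?_, ?_⟩, ?_⟩
      · intro y v hv
        rcases List.mem_cons.mp hv with he | hv
        · cases he
        · exact h2 y v hv
      · intro v π hv; exact h3 v π (List.mem_cons_of_mem _ hv)
      · intro hh; exact absurd hh (by simp)
      · simp [meas, stackSize, frameSize, cost]
  | c5 =>
      rename_i F t u π E
      refine ⟨⟨?_, h2, ?_, ?_⟩, ?_⟩
      · intro v hv; exact h3 t π List.mem_cons_self v hv
      · intro v π' hv; exact h3 v π' (List.mem_cons_of_mem _ hv)
      · intro hh; exact absurd hh (by simp)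
      · simp [meas, stackSize, frameSize, cost]; omega
  | c6 =>
      rename_i F t u π E
      refine ⟨⟨?_, h2, ?_, ?_⟩, ?_⟩
      · intro v hv; simp at hv
      · intro v π' hv
        rcases List.mem_cons.mp hv with he | hv
        · cases he
          intro w hw; exact h1 w (List.mem_cons_of_mem _ hw)
        · exact h3 v π' hv
      · intro _
        exact h1 u List.mem_cons_self
      · simp [meas, stackSize, frameSize, cost]; omega

lemma exec_inv_meas {B : ℕ} {ls : List MLab} {s s' : MState}
    (h : Exec ls s s') :
    MamInv B s →
    meas s' + (ls.count .c1 + ls.count .c2 + ls.count .c3 + ls.count .m)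
      ≤ meas s + ls.count .e * B := by
  induction h with
  | nil => intro _; simp
  | cons hstep hrest ih =>
      rename_i l ls s s1 s2
      intro hInv
      obtain ⟨hInv', hm⟩ := step_inv_meas hstep hInv
      have h2 := ih hInv'
      cases l <;> simp [List.count_cons, cost, Nat.add_mul, Nat.one_mul] at hm h2 ⊢ <;> omega

def nvar (F : Frame) : ℕ :=
  F.countP (fun e => match e with | FrameEntry.var _ => true | _ => false)

def npair (F : Frame) : ℕ :=
  F.countP (fun e => match e with | FrameEntry.pair _ _ => true | _ => false)

def bphase (s : MState) : ℕ := match s.ph with | .back => 1 | .eval => 0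

lemma step_back {l : MLab} {s s' : MState} (h : MStepL l s s') :
    nvar s'.fr + (if l = .c4 then 1 else 0) = nvar s.fr + (if l = .c2 then 1 else 0) ∧
    npair s'.fr + (if l = .c5 then 1 else 0) = npair s.fr + (if l = .c6 then 1 else 0) ∧
    bphase s' + (if l = .c6 then 1 else 0) = bphase s + (if l = .c3 then 1 else 0) := by
  cases h <;> simp [nvar, npair, bphase, List.countP_cons]

lemma exec_back {ls : List MLab} {s s' : MState} (h : Exec ls s s') :
    ls.count .c4 + nvar s'.fr = ls.count .c2 + nvar s.fr ∧
    ls.count .c5 + npair s'.fr = ls.count .c6 + npair s.fr ∧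
    ls.count .c6 + bphase s' = ls.count .c3 + bphase s := by
  induction h with
  | nil => simp
  | cons hstep hrest ih =>
      rename_i l ls s s1 s2
      obtain ⟨a, b, c⟩ := step_back hstep
      obtain ⟨a', b', c'⟩ := ih
      refine ⟨?_, ?_, ?_⟩ <;>
        (cases l <;> simp [List.count_cons] at a b c a' b' c' ⊢ <;> omega)

/-- Bilinearity of the Strong MAM: along any execution from an initial state,
(1) evaluation-phase commutative steps (plus multiplicative steps) are bounded
by `(1+|ρ|e)·|t|`, (2) backtracking commutative steps are bounded by twice the
evaluation commutative steps, hence (3) all commutative steps are bounded by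
`3·(1+|ρ|e)·|t|`. -/
theorem strong_mam_bilinear (t0 : Code) (hclosed : t0.fv = ∅)
    (ls : List MLab) (s' : MState)
    (hexec : Exec ls (initState t0) s') :
    ((ls.count .c1 + ls.count .c2 + ls.count .c3) + ls.count .m
        ≤ (1 + ls.count .e) * t0.size) ∧
    (ls.count .c4 + ls.count .c5 + ls.count .c6
        ≤ 2 * (ls.count .c1 + ls.count .c2 + ls.count .c3)) ∧
    (ls.count .c1 + ls.count .c2 + ls.count .c3 +
     ls.count .c4 + ls.count .c5 + ls.count .c6
        ≤ 3 * (1 + ls.count .e) * t0.size) := by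
  have hInv0 : MamInv t0.size (initState t0) := by
    refine ⟨?_, ?_, ?_, ?_⟩ <;> simp [initState]
  have hmeas := exec_inv_meas hexec hInv0
  have hmeas0 : meas (initState t0) = t0.size := by
    simp [meas, initState, frameSize, stackSize]
  obtain ⟨hb1, hb2, hb3⟩ := exec_back hexec
  have hnv : nvar (initState t0).fr = 0 := by simp [nvar, initState]
  have hnp : npair (initState t0).fr = 0 := by simp [npair, initState]
  have hbp : bphase (initState t0) = 0 := by simp [bphase, initState]
  rw [hnv] at hb1; rw [hnp] at hb2; rw [hbp] at hb3
  rw [hmeas0] at hmeas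
  have hx : (1 + ls.count .e) * t0.size = t0.size + ls.count .e * t0.size := by ring
  have hy : 3 * (1 + ls.count .e) * t0.size = 3 * ((1 + ls.count .e) * t0.size) := by ring
  rw [hx, hy]
  omega
end
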